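/- arXiv:2305.01939 — 7 statements merged into one kernel-verified Lean document; each statement's English description precedes it below -/
import Mathlib

section
/- For any i ∈ N, the Shapley value φ(i) = ∑_{m=0}^{n-1} (1/n) · (1/C(n-1,m)) · ∑_{S ⊆ N\{i}, |S|=m} [u(S∪{i}) - u(S)] equals ∑_{S ⊆ N\{i}} I(S∪{i})/(|S|+1), where I is the Harsanyi dividend of u. -/
/-!
For `i ∉ S`, the dividend `I (S ∪ {i})` is the alternating sum
`∑_{T ⊆ S} (-1)^{|S|-|T|} (u (T ∪ {i}) - u T)`. Dividing by `|S| + 1`, summing over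
`S ⊆ N \ {i}` and exchanging the sums, the marginal contribution `u (T ∪ {i}) - u T` gets the
coefficient `∑_j (-1)^j C(r, j) / (t + 1 + j)` with `t = |T|`, `r = n - 1 - t`. This is the beta
integral `∫₀¹ x^t (1 - x)^r dx = t! r! / (t + r + 1)!` with `(1 - x)^r` expanded, i.e. the
Shapley weight of `T`.
-/

open Finset Nat

theorem sum_range_neg_one_pow_mul_choose_succ_div {K : Type*} [Field K] (r : ℕ) (x : K) :
    ∑ j ∈ range (r + 2), (-1 : K) ^ j * (r + 1).choose j / (x + j) =
      ∑ j ∈ range (r + 1), (-1 : K) ^ j * r.choose j / (x + j) -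
        ∑ j ∈ range (r + 1), (-1 : K) ^ j * r.choose j / (x + 1 + j) := by
  have htop : ∑ j ∈ range (r + 1), (-1 : K) ^ j * r.choose j / (x + j) =
      ∑ j ∈ range (r + 2), (-1 : K) ^ j * r.choose j / (x + j) := by
    simp [sum_range_succ _ (r + 1)]
  have hpascal : ∀ j ∈ range (r + 1),
      (-1 : K) ^ (j + 1) * (r + 1).choose (j + 1) / (x + (j + 1 : ℕ)) =
        (-1 : K) ^ (j + 1) * r.choose (j + 1) / (x + (j + 1 : ℕ)) -
          (-1 : K) ^ j * r.choose j / (x + 1 + j) := by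
    intro j _
    rw [Nat.choose_succ_succ']
    push_cast
    ring
  rw [htop, sum_range_succ' _ (r + 1), sum_range_succ' _ (r + 1), sum_congr rfl hpascal,
    sum_sub_distrib]
  simp only [Nat.choose_zero_right, Nat.cast_zero]
  ring

theorem sum_range_neg_one_pow_mul_choose_div (r t : ℕ) :
    ∑ j ∈ range (r + 1), (-1 : ℝ) ^ j * r.choose j / (t + 1 + j) =
      t ! * r ! / (t + r + 1)! := by
  induction r generalizing t with
  | zero =>
    simp only [zero_add, range_one, sum_singleton, pow_zero, choose_self, cast_one, mul_one,
      CharP.cast_eq_zero, add_zero, one_div, factorial_zero, factorial_succ, cast_mul, cast_add]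
    field_simp
  | succ r ih =>
    have ih' := ih (t + 1)
    push_cast at ih'
    rw [sum_range_neg_one_pow_mul_choose_succ_div, ih, ih', add_right_comm t 1 r, ← add_assoc,
      Nat.factorial_succ (t + r + 1), Nat.factorial_succ t, Nat.factorial_succ r]
    simp only [Nat.cast_mul, Nat.cast_add, Nat.cast_one]
    field_simp
    ring

theorem Finset.sum_Icc_apply_card {α M : Type*} [DecidableEq α] [AddCommMonoid M]
    {s t : Finset α} (h : s ⊆ t) (f : ℕ → M) :
    ∑ u ∈ Icc s t, f #u = ∑ k ∈ range (#t - #s + 1), (#t - #s).choose k • f (#s + k) := by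
  have hdisj : ∀ v ∈ (t \ s).powerset, Disjoint s v := fun v hv ↦
    disjoint_of_subset_right (mem_powerset.1 hv) disjoint_sdiff
  rw [Icc_eq_image_powerset h, sum_image, ← card_sdiff_of_subset h,
    ← sum_powerset_apply_card fun k ↦ f (#s + k)]
  · exact sum_congr rfl fun v hv ↦ by rw [card_union_of_disjoint (hdisj v hv)]
  · intro v hv w hw hvw
    rw [← union_sdiff_cancel_left (hdisj v hv), ← union_sdiff_cancel_left (hdisj w hw)]
    exact congrArg (· \ s) hvw

theorem Finset.sum_powerset_sum_powerset_comm {α M : Type*} [DecidableEq α] [AddCommMonoid M]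
    (s : Finset α) (f : Finset α → Finset α → M) :
    ∑ t ∈ s.powerset, ∑ u ∈ t.powerset, f t u = ∑ u ∈ s.powerset, ∑ t ∈ Icc u s, f t u :=
  sum_comm' fun t u ↦ by
    simp only [mem_powerset, mem_Icc]
    exact ⟨fun h ↦ ⟨⟨h.2, h.1⟩, h.2.trans h.1⟩, fun h ↦ ⟨h.1.2, h.1.1⟩⟩

theorem sum_Icc_neg_one_pow_card_sub_div {α : Type*} [DecidableEq α] {s t : Finset α}
    (h : s ⊆ t) :
    ∑ u ∈ Icc s t, (-1 : ℝ) ^ (#u - #s) / (#u + 1) = (#s)! * (#t - #s)! / (#t + 1)! := by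
  rw [sum_Icc_apply_card h fun k ↦ (-1 : ℝ) ^ (k - #s) / (k + 1),
    show #t + 1 = #s + (#t - #s) + 1 by have := card_le_card h; omega,
    ← sum_range_neg_one_pow_mul_choose_div]
  refine sum_congr rfl fun k _ ↦ ?_
  rw [nsmul_eq_mul, add_tsub_cancel_left]
  push_cast
  ring

def harsanyiDividend {α R : Type*} [CommRing R] (u : Finset α → R) (s : Finset α) : R :=
  ∑ t ∈ s.powerset, (-1 : R) ^ (#s - #t) * u t

theorem harsanyiDividend_insert {α R : Type*} [DecidableEq α] [CommRing R]
    (u : Finset α → R) {s : Finset α} {a : α} (ha : a ∉ s) :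
    harsanyiDividend u (insert a s) =
      ∑ t ∈ s.powerset, (-1 : R) ^ (#s - #t) * (u (insert a t) - u t) := by
  rw [harsanyiDividend, sum_powerset_insert ha, card_insert_of_notMem ha, add_comm,
    ← sum_add_distrib]
  refine sum_congr rfl fun t ht ↦ ?_
  have hts : #t ≤ #s := card_le_card (mem_powerset.1 ht)
  have hat : a ∉ t := fun hat ↦ ha (mem_powerset.1 ht hat)
  rw [card_insert_of_notMem hat, Nat.add_sub_add_right, Nat.succ_sub hts, pow_succ]
  ring

theorem sum_powerset_harsanyiDividend_insert_div {α : Type*} [DecidableEq α]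
    (u : Finset α → ℝ) {s : Finset α} {a : α} (ha : a ∉ s) :
    ∑ t ∈ s.powerset, harsanyiDividend u (insert a t) / (#t + 1) =
      ∑ t ∈ s.powerset, (#t)! * (#s - #t)! / (#s + 1)! * (u (insert a t) - u t) := by
  calc ∑ t ∈ s.powerset, harsanyiDividend u (insert a t) / (#t + 1)
      = ∑ t ∈ s.powerset, ∑ v ∈ t.powerset,
          (-1 : ℝ) ^ (#t - #v) / (#t + 1) * (u (insert a v) - u v) := by
        refine sum_congr rfl fun t ht ↦ ?_
        rw [harsanyiDividend_insert u fun hat ↦ ha (mem_powerset.1 ht hat), sum_div]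
        exact sum_congr rfl fun v _ ↦ by ring
    _ = ∑ v ∈ s.powerset, ∑ t ∈ Icc v s,
          (-1 : ℝ) ^ (#t - #v) / (#t + 1) * (u (insert a v) - u v) :=
        sum_powerset_sum_powerset_comm s _
    _ = _ := sum_congr rfl fun v hv ↦ by
        rw [← sum_mul, sum_Icc_neg_one_pow_card_sub_div (mem_powerset.1 hv)]

theorem shapley_eq_harsanyi_allocation_general {N : Type*} [Fintype N] [DecidableEq N]
    (u I : Finset N → ℝ)
    (hI : ∀ S : Finset N, I S = ∑ T ∈ S.powerset, (-1 : ℝ) ^ (S.card - T.card) * u T)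
    (i : N) :
    ∑ S ∈ (Finset.univ.erase i).powerset,
        ((S.card.factorial * (Fintype.card N - S.card - 1).factorial : ℝ) /
          (Fintype.card N).factorial) * (u (insert i S) - u S)
      = ∑ S ∈ (Finset.univ.erase i).powerset, I (insert i S) / (S.card + 1) := by
  have hI' : I = harsanyiDividend u := funext hI
  have hcard : #(univ.erase i) + 1 = Fintype.card N := by
    rw [card_erase_add_one (mem_univ i), Finset.card_univ]
  rw [hI', sum_powerset_harsanyiDividend_insert_div u (notMem_erase i univ), hcard]
  refine sum_congr rfl fun S _ ↦ ?_
  rw [← hcard, Nat.sub_right_comm, Nat.add_sub_cancel]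

theorem shapley_eq_harsanyi_allocation {N : Type*} [Fintype N] [DecidableEq N]
    (u I : Finset N → ℝ) (hu : u ∅ = 0)
    (hI : ∀ S : Finset N, I S = ∑ T ∈ S.powerset, (-1 : ℝ) ^ (S.card - T.card) * u T)
    (i : N) :
    ∑ S ∈ (Finset.univ.erase i).powerset,
        ((S.card.factorial * (Fintype.card N - S.card - 1).factorial : ℝ) /
          (Fintype.card N).factorial) * (u (insert i S) - u S)
      = ∑ S ∈ (Finset.univ.erase i).powerset, I (insert i S) / (S.card + 1) :=
  shapley_eq_harsanyi_allocation_general u I hI i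
end

section
/- For any T ⊆ N, the Shapley interaction index I^Sh(T) = ∑_{S ⊆ N\T} |S|!(n-|S|-|T|)!/(n-|T|+1)! · Δu_T(S) equals ∑_{S ⊆ N\T} I(S ∪ T)/(|S|+1), where I is the Harsanyi dividend of u. -/
/-!
The discrete Newton formula `Δu_T(S) = ∑_{K ⊆ S} I(K ∪ T)` for `S` disjoint from `T` follows
by induction on `S` from `Δu_{T ∪ {i}}(S) = Δu_T(S ∪ {i}) - Δu_T(S)`. Exchanging the two
sums, the coefficient of `I(K ∪ T)` becomes `∑_{K ⊆ S ⊆ N \ T} |S|! (m - |S|)! / (m + 1)!`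
with `m = |N \ T|`; grouping by `|S|`, the hockey-stick identity evaluates it to `1 / (|K| + 1)`.
-/

open Finset

open scoped Nat

section DiscreteDerivative

variable {α R : Type*} [DecidableEq α] [Ring R]

/-- `discreteDeriv u T S` is `Δu_T(S)`; the Harsanyi dividend `I(S)` is `discreteDeriv u S ∅`. -/
def discreteDeriv (u : Finset α → R) (T S : Finset α) : R :=
  ∑ L ∈ T.powerset, (-1 : R) ^ (#T - #L) * u (L ∪ S)

theorem discreteDeriv_insert (u : Finset α → R) {T : Finset α} {i : α} (hiT : i ∉ T)
    (S : Finset α) :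
    discreteDeriv u (insert i T) S = discreteDeriv u T (insert i S) - discreteDeriv u T S := by
  rw [discreteDeriv, sum_powerset_insert hiT, card_insert_of_notMem hiT, add_comm,
    sub_eq_add_neg, discreteDeriv, discreteDeriv, ← sum_neg_distrib]
  congr 1
  · refine sum_congr rfl fun L hL => ?_
    have hiL : i ∉ L := fun h => hiT (mem_powerset.1 hL h)
    rw [card_insert_of_notMem hiL, Nat.add_sub_add_right, insert_union, union_insert]
  · refine sum_congr rfl fun L hL => ?_
    rw [Nat.sub_add_comm (card_le_card (mem_powerset.1 hL)), pow_succ, mul_neg_one, neg_mul]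

theorem discreteDeriv_eq_sum_powerset (u : Finset α → R) {S T : Finset α} (h : Disjoint S T) :
    discreteDeriv u T S = ∑ K ∈ S.powerset, discreteDeriv u (K ∪ T) ∅ := by
  induction S using Finset.induction_on generalizing T with
  | empty => simp
  | insert i S hiS ih =>
    obtain ⟨hiT, hST⟩ := disjoint_insert_left.1 h
    have hS_insert : Disjoint S (insert i T) := disjoint_insert_right.2 ⟨hiS, hST⟩
    simp_rw [sum_powerset_insert hiS, insert_union, ← union_insert, ← ih hST, ← ih hS_insert,
      discreteDeriv_insert u hiT, add_sub_cancel]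

end DiscreteDerivative

theorem Nat.succ_mul_sum_choose_mul_factorial_mul_factorial (M k : ℕ) :
    (k + 1) * ∑ j ∈ range (M + 1), M.choose j * ((k + j)! * (M - j)!) = (M + k + 1)! := by
  have hterm : ∀ j ∈ range (M + 1), M.choose j * ((k + j)! * (M - j)!) =
      M ! * k ! * (j + k).choose k := by
    intro j hj
    apply Nat.eq_of_mul_eq_mul_right (Nat.factorial_pos j)
    calc M.choose j * ((k + j)! * (M - j)!) * j !
        = (M.choose j * j ! * (M - j)!) * (j + k)! := by rw [Nat.add_comm k j]; ring
      _ = M ! * ((j + k).choose k * j ! * k !) := by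
        rw [Nat.choose_mul_factorial_mul_factorial (Nat.lt_succ_iff.1 (mem_range.1 hj)),
          Nat.add_choose_mul_factorial_mul_factorial]
      _ = M ! * k ! * (j + k).choose k * j ! := by ring
  rw [sum_congr rfl hterm, ← mul_sum, Nat.sum_range_add_choose, add_assoc,
    ← Nat.add_choose_mul_factorial_mul_factorial M (k + 1), Nat.factorial_succ]
  ring

section Coefficients

variable {α : Type*} [DecidableEq α]

theorem sum_powerset_sum_powerset_eq_sum_Icc {M : Type*} [AddCommMonoid M] (A : Finset α)
    (f : Finset α → Finset α → M) :
    ∑ S ∈ A.powerset, ∑ K ∈ S.powerset, f S K =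
      ∑ K ∈ A.powerset, ∑ S ∈ Icc K A, f S K :=
  sum_comm' fun S K => by
    simp only [mem_powerset, mem_Icc]
    exact ⟨fun ⟨hSA, hKS⟩ => ⟨⟨hKS, hSA⟩, hKS.trans hSA⟩, fun ⟨h, _⟩ => h.symm⟩

noncomputable def shapleyWeight (m s : ℕ) : ℝ := (s ! * (m - s)! : ℝ) / (m + 1)!

theorem sum_range_choose_nsmul_shapleyWeight (M k : ℕ) :
    ∑ j ∈ range (M + 1), M.choose j • shapleyWeight (M + k) (k + j) = 1 / (k + 1) := by
  have key : ((k + 1 : ℕ) : ℝ) *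
      ∑ j ∈ range (M + 1), (M.choose j * ((k + j)! * (M - j)!) : ℕ) = (M + k + 1)! := by
    exact_mod_cast Nat.succ_mul_sum_choose_mul_factorial_mul_factorial M k
  have hterm : ∀ j ∈ range (M + 1), M.choose j • shapleyWeight (M + k) (k + j) =
      ((M.choose j * ((k + j)! * (M - j)!) : ℕ) : ℝ) / (M + k + 1)! := fun j _ => by
    rw [shapleyWeight, show M + k - (k + j) = M - j by omega, nsmul_eq_mul, mul_div_assoc]
    push_cast
    ring
  rw [sum_congr rfl hterm, ← sum_div, ← Nat.cast_sum,
    div_eq_div_iff (by positivity) (by positivity), one_mul, mul_comm, ← key]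
  push_cast
  ring

theorem sum_Icc_shapleyWeight {K A : Finset α} (h : K ⊆ A) :
    ∑ S ∈ Icc K A, shapleyWeight #A #S = 1 / (#K + 1) := by
  have hunion : ∀ J ∈ (A \ K).powerset, #(K ∪ J) = #K + #J := fun J hJ =>
    card_union_of_disjoint (subset_sdiff.1 (mem_powerset.1 hJ)).2.symm
  have hinj : Set.InjOn (K ∪ ·) (A \ K).powerset := fun J₁ hJ₁ J₂ hJ₂ hJ => by
    rw [← union_sdiff_cancel_left (subset_sdiff.1 (mem_powerset.1 hJ₁)).2.symm,
      ← union_sdiff_cancel_left (subset_sdiff.1 (mem_powerset.1 hJ₂)).2.symm]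
    exact congrArg (· \ K) hJ
  rw [Icc_eq_image_powerset h, sum_image hinj, sum_congr rfl fun J hJ => by rw [hunion J hJ],
    sum_powerset_apply_card (fun j => shapleyWeight #A (#K + j)),
    ← card_sdiff_add_card_eq_card h, sum_range_choose_nsmul_shapleyWeight]

end Coefficients

theorem shapley_interaction_index_eq_general {N : Type*} [Fintype N] [DecidableEq N]
    (u I : Finset N → ℝ)
    (hI : ∀ S : Finset N, I S = ∑ T ∈ S.powerset, (-1 : ℝ) ^ (S.card - T.card) * u T)
    (T : Finset N) :
    ∑ S ∈ (Finset.univ \ T).powerset,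
        ((S.card.factorial * (Fintype.card N - S.card - T.card).factorial : ℝ) /
          (Fintype.card N - T.card + 1).factorial) *
        (∑ L ∈ T.powerset, (-1 : ℝ) ^ (T.card - L.card) * u (L ∪ S))
      = ∑ S ∈ (Finset.univ \ T).powerset, I (S ∪ T) / (S.card + 1) := by
  set A := univ \ T
  have hA : #A = Fintype.card N - #T := by rw [card_sdiff_of_subset (subset_univ T), card_univ]
  have hdividend : ∀ K, I K = discreteDeriv u K ∅ := fun K => by simp [hI, discreteDeriv]
  calc _ = ∑ S ∈ A.powerset, ∑ K ∈ S.powerset, shapleyWeight #A #S * I (K ∪ T) := by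
        refine sum_congr rfl fun S hS => ?_
        rw [shapleyWeight, hA, Nat.sub_right_comm, ← mul_sum]
        simp_rw [hdividend]
        congr 1
        exact discreteDeriv_eq_sum_powerset u (subset_sdiff.1 (mem_powerset.1 hS)).2
    _ = ∑ K ∈ A.powerset, (∑ S ∈ Icc K A, shapleyWeight #A #S) * I (K ∪ T) := by
        simp_rw [sum_powerset_sum_powerset_eq_sum_Icc, sum_mul]
    _ = _ := sum_congr rfl fun K hK => by
        rw [sum_Icc_shapleyWeight (mem_powerset.1 hK), one_div_mul_eq_div]

theorem shapley_interaction_index_eq {N : Type*} [Fintype N] [DecidableEq N]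
    (u I : Finset N → ℝ) (hu : u ∅ = 0)
    (hI : ∀ S : Finset N, I S = ∑ T ∈ S.powerset, (-1 : ℝ) ^ (S.card - T.card) * u T)
    (T : Finset N) :
    ∑ S ∈ (Finset.univ \ T).powerset,
        ((S.card.factorial * (Fintype.card N - S.card - T.card).factorial : ℝ) /
          (Fintype.card N - T.card + 1).factorial) *
        (∑ L ∈ T.powerset, (-1 : ℝ) ^ (T.card - L.card) * u (L ∪ S))
      = ∑ S ∈ (Finset.univ \ T).powerset, I (S ∪ T) / (S.card + 1) :=
  shapley_interaction_index_eq_general u I hI T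
end

section
/- For integers 0 ≤ L < n, ∑_{k=0}^{n-L-1} C(n-L-1, k) / C(n-1, L+k) = n/(L+1). -/
open Finset

/-! Writing `n = L + r + 1`, each summand equals `C(L+k, L) / C(L+r, L)`, so the sum is a
hockey-stick sum `C(L+r+1, L+1) / C(L+r, L) = (L+r+1)/(L+1)`. -/

section

variable {K : Type*} [Field K] [CharZero K]

theorem Nat.cast_choose_div_choose_add_add {L r k : ℕ} (hk : k ≤ r) :
    (r.choose k : K) / (L + r).choose (L + k) = (L + k).choose L / (L + r).choose L := by
  have hmul : r.choose k * (L + r).choose L = (L + k).choose L * (L + r).choose (L + k) := by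
    simpa [mul_comm] using (Nat.choose_mul (n := L + r) (Nat.le_add_right L k)).symm
  have hne : ((L + r).choose (L + k) : K) ≠ 0 := by
    exact_mod_cast (Nat.choose_pos (by omega : L + k ≤ L + r)).ne'
  have hden : ((L + r).choose L : K) ≠ 0 := by
    exact_mod_cast (Nat.choose_pos (Nat.le_add_right L r)).ne'
  rw [div_eq_div_iff hne hden]
  exact_mod_cast hmul

theorem Nat.cast_sum_range_choose_div_choose_add_add (L r : ℕ) :
    ∑ k ∈ range (r + 1), (r.choose k : K) / (L + r).choose (L + k) =
      ((L + r + 1 : ℕ) : K) / (L + 1) := by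
  have hden : ((L + r).choose L : K) ≠ 0 := by
    exact_mod_cast (Nat.choose_pos (Nat.le_add_right L r)).ne'
  have hockey : ∑ k ∈ range (r + 1), (L + k).choose L = (L + r + 1).choose (L + 1) := by
    simpa only [add_comm _ L, add_right_comm r L] using Nat.sum_range_add_choose r L
  calc ∑ k ∈ range (r + 1), (r.choose k : K) / (L + r).choose (L + k)
      = (∑ k ∈ range (r + 1), ((L + k).choose L : K)) / (L + r).choose L := by
        rw [sum_div]
        exact sum_congr rfl fun k hk ↦
          Nat.cast_choose_div_choose_add_add (Nat.lt_succ_iff.mp (mem_range.mp hk))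
    _ = ((L + r + 1 : ℕ) : K) / (L + 1) := by
        rw [div_eq_div_iff hden (Nat.cast_add_one_ne_zero L)]
        rw [← Nat.cast_sum, hockey]
        exact_mod_cast (Nat.add_one_mul_choose_eq (L + r) L).symm

end

theorem binom_sum_identity_shapley (n L : ℕ) (hL : L < n) :
    ∑ k ∈ Finset.range (n - L),
        (Nat.choose (n - L - 1) k : ℝ) / (Nat.choose (n - 1) (L + k) : ℝ)
      = (n : ℝ) / ((L : ℝ) + 1) := by
  obtain ⟨r, rfl⟩ : ∃ r, n = L + r + 1 := ⟨n - L - 1, by omega⟩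
  rw [show L + r + 1 - L = r + 1 by omega, show r + 1 - 1 = r by omega, Nat.add_sub_cancel]
  exact Nat.cast_sum_range_choose_div_choose_add_add L r
end

section
/- For integers n, L, k with L ≥ 0, k ≥ 1, and L + k ≤ n, ∑_{m=0}^{n-L-k} C(n-L-k, m) / C(n-1, L+m) = (n/k) · C(L+k, k)^{-1}. -/
/-! With `N = n - L - k` and `M = n - 1`, Pascal's rule on `C(N + 1, m)` and the identity
`1 / C(M + 1, j) + 1 / C(M + 1, j + 1) = (M + 2) / (M + 1) · 1 / C(M, j)` show that the sum gets
multiplied by `(M + 2) / (M + 1)` when `N` grows by one. The sum is therefore proportional to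
`n`, and at `N = 0` it equals `1 / C(L + k - 1, L)`. -/

open Finset

theorem Nat.inv_choose_succ_add_inv_choose_succ_succ {K : Type*} [Field K] [CharZero K]
    {n j : ℕ} (hj : j ≤ n) :
    ((n + 1).choose j : K)⁻¹ + ((n + 1).choose (j + 1) : K)⁻¹ =
      (n + 2) / (n + 1) * (n.choose j : K)⁻¹ := by
  have h₁ : ((n + 1 : ℕ) : K) * n.choose j = (n + 1).choose (j + 1) * (j + 1 : ℕ) := by
    exact_mod_cast Nat.add_one_mul_choose_eq n j
  have h₂ : (n.choose j : K) * (n + 1 : ℕ) = (n + 1).choose j * (n + 1 - j : ℕ) := by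
    exact_mod_cast Nat.choose_mul_succ_eq n j
  have hc : (n.choose j : K) ≠ 0 := Nat.cast_ne_zero.mpr (Nat.choose_pos hj).ne'
  have hc₁ : ((n + 1).choose j : K) ≠ 0 := Nat.cast_ne_zero.mpr (Nat.choose_pos (by omega)).ne'
  have hc₂ : ((n + 1).choose (j + 1) : K) ≠ 0 :=
    Nat.cast_ne_zero.mpr (Nat.choose_pos (by omega)).ne'
  rw [Nat.cast_sub (by omega)] at h₂
  push_cast at h₁ h₂
  field_simp
  linear_combination ((n + 1).choose j : K) * h₁ + ((n + 1).choose (j + 1) : K) * h₂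

theorem Nat.sum_range_choose_div_choose_add {K : Type*} [Field K] [CharZero K] (a b N : ℕ) :
    ∑ m ∈ range (N + 1), (N.choose m : K) / ((N + a + b).choose (a + m)) =
      (N + a + b + 1) / ((a + b + 1) * (a + b).choose a) := by
  have hc : ((a + b).choose a : K) ≠ 0 := Nat.cast_ne_zero.mpr (Nat.choose_pos (by omega)).ne'
  have hab : (a + b + 1 : K) ≠ 0 := by exact_mod_cast Nat.succ_ne_zero (a + b)
  induction N with
  | zero =>
    simp only [zero_add, range_one, sum_singleton, Nat.choose_self, Nat.cast_one, add_zero,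
      Nat.cast_zero]
    field_simp
  | succ N ih =>
    have pascal := sum_choose_succ_mul (fun m _ => ((N + a + b + 1).choose (a + m) : K)⁻¹) N
    have recombine : ∀ m ∈ range (N + 1),
        (N.choose m : K) * (((N + a + b + 1).choose (a + m) : K)⁻¹ +
          ((N + a + b + 1).choose (a + m + 1) : K)⁻¹) =
        (N + a + b + 2) / (N + a + b + 1) *
          (N.choose m * ((N + a + b).choose (a + m) : K)⁻¹) := by
      intro m hm
      rw [Nat.inv_choose_succ_add_inv_choose_succ_succ (by grind)]
      push_cast
      ring
    simp only [div_eq_mul_inv] at ih ⊢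
    rw [show N + 1 + a + b = N + a + b + 1 by omega, pascal, ← sum_add_distrib]
    simp only [← mul_add, ← add_assoc]
    rw [sum_congr rfl recombine, ← mul_sum, ih]
    have hM : (N + a + b + 1 : K) ≠ 0 := by exact_mod_cast Nat.succ_ne_zero (N + a + b)
    push_cast
    field_simp
    ring

theorem binom_sum_identity_shapley_taylor (n L k : ℕ) (hk : 1 ≤ k) (h : L + k ≤ n) :
    ∑ m ∈ Finset.range (n - L - k + 1),
        (Nat.choose (n - L - k) m : ℝ) / (Nat.choose (n - 1) (L + m) : ℝ)
      = ((n : ℝ) / (k : ℝ)) * ((Nat.choose (L + k) k : ℝ))⁻¹ := by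
  obtain ⟨b, rfl⟩ : ∃ b, k = b + 1 := ⟨k - 1, by omega⟩
  obtain ⟨N, rfl⟩ : ∃ N, n = N + L + b + 1 := ⟨n - L - (b + 1), by omega⟩
  rw [show N + L + b + 1 - L - (b + 1) = N by omega, Nat.add_sub_cancel,
    Nat.sum_range_choose_div_choose_add, ← add_assoc]
  have absorb : ((b + 1 : ℕ) : ℝ) * (L + b + 1).choose (b + 1) =
      (L + b + 1 : ℕ) * (L + b).choose L := by
    rw [Nat.choose_symm_add, mul_comm]
    exact_mod_cast (Nat.add_one_mul_choose_eq (L + b) b).symm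
  have hc : ((L + b + 1).choose (b + 1) : ℝ) ≠ 0 :=
    Nat.cast_ne_zero.mpr (Nat.choose_pos (by omega)).ne'
  have hc' : ((L + b).choose L : ℝ) ≠ 0 := Nat.cast_ne_zero.mpr (Nat.choose_pos (by omega)).ne'
  push_cast at absorb ⊢
  field_simp
  linear_combination absorb
end

section
/- For integers L ≥ 0, t ≥ 0, and n ≥ L + t + 1, ∑_{s=0}^{n-L-t} C(n-L-t, s) / C(n-t, L+s) = (n - t + 1)/(L + 1). -/
/-! Since `C(L+m, L+s) C(L+s, L) = C(L+m, L) C(m, s)`, the `s`-th term equals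
`C(L+s, L) / C(L+m, L)`; the hockey-stick identity sums the numerators to `C(L+m+1, L+1)`,
and `C(L+m+1, L+1) / C(L+m, L) = (L+m+1)/(L+1)`. -/

open Finset

namespace Nat

variable {K : Type*} [Field K] [CharZero K]

theorem cast_choose_div_choose_add {L m s : ℕ} (hs : s ≤ m) :
    (m.choose s : K) / (L + m).choose (L + s) = (L + s).choose L / (L + m).choose L := by
  have hmul : (L + m).choose (L + s) * (L + s).choose L = (L + m).choose L * m.choose s := by
    simpa using choose_mul (n := L + m) (k := L + s) (s := L) (by omega)
  rw [div_eq_div_iff (by exact_mod_cast (choose_pos (by omega)).ne')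
    (by exact_mod_cast (choose_pos (by omega)).ne')]
  norm_cast
  linarith

theorem cast_choose_succ_div_choose (L m : ℕ) :
    ((L + m + 1).choose (L + 1) : K) / (L + m).choose L = (L + m + 1) / (L + 1) := by
  rw [div_eq_div_iff (by exact_mod_cast (choose_pos (by omega)).ne') (Nat.cast_add_one_ne_zero L)]
  exact_mod_cast (add_one_mul_choose_eq (L + m) L).symm

theorem sum_range_cast_choose_div_choose_add (L m : ℕ) :
    ∑ s ∈ range (m + 1), (m.choose s : K) / (L + m).choose (L + s) = (L + m + 1) / (L + 1) := by
  have hsum : ∑ s ∈ range (m + 1), (L + s).choose L = (L + m + 1).choose (L + 1) := by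
    rw [add_comm L m, ← sum_range_add_choose m L]
    exact sum_congr rfl fun s _ => by rw [add_comm]
  rw [sum_congr rfl fun s hs => cast_choose_div_choose_add (mem_range_succ_iff.mp hs),
    ← sum_div, ← cast_sum, hsum, cast_choose_succ_div_choose]

end Nat

theorem binom_sum_identity_shapley_interaction (n L t : ℕ) (h : L + t + 1 ≤ n) :
    ∑ s ∈ Finset.range (n - L - t + 1),
        (Nat.choose (n - L - t) s : ℝ) / (Nat.choose (n - t) (L + s) : ℝ)
      = ((n : ℝ) - (t : ℝ) + 1) / ((L : ℝ) + 1) := by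
  obtain ⟨m, rfl⟩ : ∃ m, n = L + t + m := ⟨n - L - t, by omega⟩
  have hm : L + t + m - L - t = m := by omega
  have hnt : L + t + m - t = L + m := by omega
  rw [hm, hnt, Nat.sum_range_cast_choose_div_choose_add]
  push_cast
  ring
end

section
/- Let ū(m) = E_{S ⊆ N, |S|=m}[u(S)] be the average of u over all subsets of size m, and let A(k) = ∑_{T ⊆ N, |T|=k} I(T). Then for every 0 ≤ m ≤ n, ū(m) = ∑_{k=1}^{m} (C(m,k)/C(n,k)) · A(k). -/
/-!
Möbius inversion on the Boolean lattice turns the definition of the dividends into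
`u S = ∑ T ⊆ S, I T`. Summing this over the `m`-subsets `S` counts each `k`-subset `T` exactly
`C(n - k, m - k)` times, and `C(n - k, m - k) / C(n, m) = C(m, k) / C(n, k)`. The `k = 0` term
vanishes because `I ∅ = u ∅ = 0`.
-/

open Finset

namespace Finset

variable {α : Type*} [DecidableEq α]

theorem sum_Icc_neg_one_pow_card_sub {R : Type*} [Ring R] {s t : Finset α} (h : s ⊆ t) :
    ∑ u ∈ Icc s t, (-1 : R) ^ (#u - #s) = if s = t then 1 else 0 := by
  have hinj : Set.InjOn (s ∪ ·) ↑(t \ s).powerset := fun v hv w hw hvw => by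
    simp only [coe_powerset, Set.mem_preimage, Set.mem_powerset_iff, coe_sdiff,
      Set.subset_sdiff] at hv hw
    rw [← union_sdiff_cancel_left (disjoint_coe.mp hv.2).symm,
      ← union_sdiff_cancel_left (disjoint_coe.mp hw.2).symm]
    exact congrArg (· \ s) hvw
  rw [Icc_eq_image_powerset h, sum_image hinj]
  have hcard : ∀ v ∈ (t \ s).powerset, #(s ∪ v) - #s = #v := fun v hv => by
    rw [card_union_of_disjoint (disjoint_sdiff.mono_right (mem_powerset.mp hv))]
    omega
  rw [sum_congr rfl fun v hv => by rw [hcard v hv]]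
  have := congrArg (Int.cast : ℤ → R) (sum_powerset_neg_one_pow_card (x := t \ s))
  push_cast at this
  rw [this]
  exact if_congr (sdiff_eq_empty_iff_subset.trans
    ⟨fun hts => subset_antisymm h hts, fun hst => hst ▸ subset_rfl⟩) rfl rfl

theorem sum_powerset_sum_powerset_neg_one_pow_mul {R : Type*} [Ring R] (u : Finset α → R)
    (s : Finset α) :
    ∑ t ∈ s.powerset, ∑ r ∈ t.powerset, (-1 : R) ^ (#t - #r) * u r = u s := by
  calc ∑ t ∈ s.powerset, ∑ r ∈ t.powerset, (-1 : R) ^ (#t - #r) * u r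
      = ∑ r ∈ s.powerset, ∑ t ∈ Icc r s, (-1 : R) ^ (#t - #r) * u r := by
        refine sum_comm' fun t r => ?_
        simp only [mem_powerset, mem_Icc]
        exact ⟨fun ⟨hts, hrt⟩ => ⟨⟨hrt, hts⟩, hrt.trans hts⟩, fun ⟨⟨hrt, hts⟩, _⟩ => ⟨hts, hrt⟩⟩
    _ = ∑ r ∈ s.powerset, if r = s then u r else 0 := by
        refine sum_congr rfl fun r hr => ?_
        rw [← sum_mul, sum_Icc_neg_one_pow_card_sub (mem_powerset.mp hr), ite_mul, one_mul,
          zero_mul]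
    _ = u s := by rw [sum_ite_eq' _ s, if_pos (mem_powerset_self s)]

theorem sum_powersetCard_sum_powersetCard {M : Type*} [AddCommMonoid M] (f : Finset α → M)
    (s : Finset α) {k m : ℕ} (hkm : k ≤ m) :
    ∑ t ∈ s.powersetCard m, ∑ r ∈ t.powersetCard k, f r
      = (#s - k).choose (m - k) • ∑ r ∈ s.powersetCard k, f r := by
  calc ∑ t ∈ s.powersetCard m, ∑ r ∈ t.powersetCard k, f r
      = ∑ r ∈ s.powersetCard k, ∑ t ∈ (s.powersetCard m).filter (r ⊆ ·), f r := by
        refine sum_comm' fun t r => ?_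
        simp only [mem_powersetCard, mem_filter]
        exact ⟨fun ⟨⟨hts, htm⟩, hrt, hrk⟩ => ⟨⟨⟨hts, htm⟩, hrt⟩, hrt.trans hts, hrk⟩,
          fun ⟨⟨⟨hts, htm⟩, hrt⟩, _, hrk⟩ => ⟨⟨hts, htm⟩, hrt, hrk⟩⟩
    _ = (#s - k).choose (m - k) • ∑ r ∈ s.powersetCard k, f r := by
        rw [smul_sum]
        refine sum_congr rfl fun r hr => ?_
        obtain ⟨hrs, hrk⟩ := mem_powersetCard.mp hr
        rw [sum_const, card_filter_powersetCard_subset r s m hrs (hrk ▸ hkm), hrk]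

theorem sum_powersetCard_sum_powerset {M : Type*} [AddCommMonoid M] (f : Finset α → M)
    (s : Finset α) (m : ℕ) :
    ∑ t ∈ s.powersetCard m, ∑ r ∈ t.powerset, f r
      = ∑ k ∈ range (m + 1), (#s - k).choose (m - k) • ∑ r ∈ s.powersetCard k, f r := by
  calc ∑ t ∈ s.powersetCard m, ∑ r ∈ t.powerset, f r
      = ∑ t ∈ s.powersetCard m, ∑ k ∈ range (m + 1), ∑ r ∈ t.powersetCard k, f r := by
        refine sum_congr rfl fun t ht => ?_
        rw [sum_powerset, (mem_powersetCard.mp ht).2]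
    _ = _ := by
        rw [sum_comm]
        exact sum_congr rfl fun k hk =>
          sum_powersetCard_sum_powersetCard f s (Nat.lt_succ_iff.mp (mem_range.mp hk))

end Finset

theorem Nat.choose_sub_div_choose {K : Type*} [Field K] [CharZero K] {n m k : ℕ} (hkm : k ≤ m)
    (hmn : m ≤ n) :
    ((n - k).choose (m - k) : K) / n.choose m = m.choose k / n.choose k := by
  have hm : (n.choose m : K) ≠ 0 := Nat.cast_ne_zero.mpr (Nat.choose_pos hmn).ne'
  have hk : (n.choose k : K) ≠ 0 := Nat.cast_ne_zero.mpr (Nat.choose_pos (hkm.trans hmn)).ne'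
  rw [div_eq_div_iff hm hk]
  norm_cast
  rw [mul_comm, ← Nat.choose_mul hkm, mul_comm]

theorem avg_output_decomposition {N : Type*} [Fintype N] [DecidableEq N]
    (u I : Finset N → ℝ) (hu : u ∅ = 0)
    (hI : ∀ S : Finset N, I S = ∑ T ∈ S.powerset, (-1 : ℝ) ^ (S.card - T.card) * u T)
    (A : ℕ → ℝ)
    (hA : ∀ k, A k = ∑ T ∈ Finset.powersetCard k (Finset.univ : Finset N), I T)
    (ubar : ℕ → ℝ)
    (hubar : ∀ m, ubar m = ((Nat.choose (Fintype.card N) m : ℝ))⁻¹ *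
        ∑ S ∈ Finset.powersetCard m (Finset.univ : Finset N), u S) :
    ∀ m, m ≤ Fintype.card N →
      ubar m = ∑ k ∈ Finset.Icc 1 m,
        ((Nat.choose m k : ℝ) / (Nat.choose (Fintype.card N) k : ℝ)) * A k := by
  intro m hm
  have hsum_I : ∀ S : Finset N, ∑ T ∈ S.powerset, I T = u S := fun S => by
    simp only [hI, sum_powerset_sum_powerset_neg_one_pow_mul]
  have hA0 : A 0 = 0 := by simp [hA, hI, hu]
  calc ubar m
      = ((Fintype.card N).choose m : ℝ)⁻¹ *
          ∑ S ∈ powersetCard m univ, ∑ T ∈ S.powerset, I T := by simp only [hubar, hsum_I]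
    _ = ((Fintype.card N).choose m : ℝ)⁻¹ *
          ∑ k ∈ range (m + 1), ((Fintype.card N - k).choose (m - k) : ℝ) * A k := by
        simp only [sum_powersetCard_sum_powerset, card_univ, nsmul_eq_mul, hA]
    _ = _ := by
        rw [range_eq_Ico, sum_eq_sum_Ico_succ_bot m.succ_pos, hA0, mul_zero, zero_add, mul_sum]
        refine sum_congr rfl fun k hk => ?_
        rw [← mul_assoc, inv_mul_eq_div,
          Nat.choose_sub_div_choose (mem_Icc.mp hk).2 hm]
end

section
/- Let M < n be positive integers and let w ∈ ℝ^M. If ∑_{k=1}^{M} (C(m,k)/C(n,k)) w_k = 0 for every m ∈ {n, n-1, ..., n-M}, then w = 0. Equivalently, the (M+1)×M matrix C with entries C_{j,k} = C(n-j, k)/C(n,k) for j = 0,...,M and k = 1,...,M has rank M. -/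
open Finset

theorem binom_coeff_matrix_injective (n M : ℕ) (hM : 0 < M) (hMn : M < n)
    (w : Fin M → ℝ)
    (h : ∀ j : ℕ, j ≤ M →
      ∑ k : Fin M,
          ((Nat.choose (n - j) ((k : ℕ) + 1) : ℝ) / (Nat.choose n ((k : ℕ) + 1) : ℝ)) * w k
        = 0) :
    w = 0 := by
  have hchoose : ∀ k : Fin M, (Nat.choose n ((k : ℕ) + 1) : ℝ) ≠ 0 := by
    intro k
    have : 0 < Nat.choose n ((k : ℕ) + 1) := Nat.choose_pos (by omega)
    positivity
  have hfact : ∀ k : Fin M, ((Nat.factorial ((k : ℕ) + 1) : ℕ) : ℝ) ≠ 0 := by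
    intro k
    exact_mod_cast (Nat.factorial_pos _).ne'
  set d : Fin M → ℝ := fun k => (Nat.choose n ((k : ℕ) + 1) : ℝ) * ((Nat.factorial ((k : ℕ) + 1) : ℕ) : ℝ)
    with hd
  have hdne : ∀ k, d k ≠ 0 := fun k => mul_ne_zero (hchoose k) (hfact k)
  set p : Polynomial ℝ :=
    ∑ k : Fin M, Polynomial.C (w k / d k) * descPochhammer ℝ ((k : ℕ) + 1) with hp
  have hdeg : p.natDegree ≤ M := by
    refine Polynomial.natDegree_sum_le_of_forall_le _ _ (fun k _ => ?_)
    refine (Polynomial.natDegree_C_mul_le _ _).trans ?_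
    rw [descPochhammer_natDegree]
    omega
  have heval : ∀ j : Fin (M + 1), p.eval (((n - (j : ℕ) : ℕ) : ℝ)) = 0 := by
    intro j
    have hj : (j : ℕ) ≤ M := by omega
    have := h j hj
    rw [hp, Polynomial.eval_finset_sum]
    rw [← this]
    refine Finset.sum_congr rfl (fun k _ => ?_)
    rw [Polynomial.eval_mul, Polynomial.eval_C,
      descPochhammer_eval_eq_descFactorial,
      Nat.descFactorial_eq_factorial_mul_choose]
    rw [hd]
    have h1 := hchoose k
    have h2 := hfact k
    push_cast
    field_simp
  have hpz : p = 0 := by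
    have hinj : Function.Injective (fun j : Fin (M + 1) => ((n - (j : ℕ) : ℕ) : ℝ)) := by
      intro a b hab
      have hab' : ((n - (a : ℕ) : ℕ) : ℝ) = ((n - (b : ℕ) : ℕ) : ℝ) := hab
      have : (n - (a : ℕ) : ℕ) = n - (b : ℕ) := by exact_mod_cast hab'
      have ha : (a : ℕ) ≤ M := by omega
      have hb : (b : ℕ) ≤ M := by omega
      ext
      omega
    exact Polynomial.eq_zero_of_natDegree_lt_card_of_eval_eq_zero p hinj heval
      (by simpa using Nat.lt_succ_of_le hdeg)
  -- now extract coefficients top-down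
  by_contra hw
  have hne : (Finset.univ.filter (fun k : Fin M => w k ≠ 0)).Nonempty := by
    rw [Finset.filter_nonempty_iff]
    simpa [funext_iff] using hw
  obtain ⟨k, hkmem, hkmax⟩ := Finset.exists_max_image _ id hne
  rw [Finset.mem_filter] at hkmem
  have hwk : w k ≠ 0 := hkmem.2
  have hco : p.coeff ((k : ℕ) + 1) = 0 := by rw [hpz]; simp
  rw [hp, Polynomial.finset_sum_coeff] at hco
  have hsum : ∑ j : Fin M, (Polynomial.C (w j / d j) * descPochhammer ℝ ((j : ℕ) + 1)).coeff
      ((k : ℕ) + 1) = w k / d k := by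
    rw [Finset.sum_eq_single k]
    · rw [Polynomial.coeff_C_mul]
      have : (descPochhammer ℝ ((k : ℕ) + 1)).coeff ((k : ℕ) + 1) = 1 := by
        have hm := monic_descPochhammer (R := ℝ) ((k : ℕ) + 1)
        have := hm.coeff_natDegree
        rwa [descPochhammer_natDegree] at this
      rw [this, mul_one]
    · intro j _ hjk
      by_cases hwj : w j = 0
      · rw [hwj, zero_div, map_zero, zero_mul, Polynomial.coeff_zero]
      · have hjle : (j : ℕ) ≤ (k : ℕ) := by
          have hle := hkmax j (Finset.mem_filter.mpr ⟨Finset.mem_univ _, hwj⟩)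
          simp only [id] at hle
          exact Fin.le_def.mp hle
        have hjlt : (j : ℕ) < (k : ℕ) := lt_of_le_of_ne hjle (by
          intro hcon; exact hjk (Fin.ext hcon))
        rw [Polynomial.coeff_C_mul,
          Polynomial.coeff_eq_zero_of_natDegree_lt
            (by rw [descPochhammer_natDegree]; omega), mul_zero]
    · intro hk; exact absurd (Finset.mem_univ k) hk
  rw [hsum] at hco
  exact hwk ((div_eq_zero_iff.mp hco).resolve_right (hdne k))
end
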